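/- arXiv:1505.04920 — 2 statements merged into one kernel-verified Lean document; each statement's English description precedes it below -/
import Mathlib

section
/- Let A ∈ ℝ^{d×d} be a regular row-stochastic matrix, i.e. A is row-stochastic and A_* = lim_{k→∞} A^k exists. Then for every α ∈ (0,1) the matrix I − αA is invertible, and lim_{α→1⁻} (1 − α)(I − αA)^{-1} = A_*. -/
/-!
Row-stochasticity implies `‖A‖ ≤ 1` in the `ℓ∞` operator norm, so for `|α| < 1` the
Neumann series yields `(1 - α) (I - α A)⁻¹ = ∑ₖ (1 - α) αᵏ Aᵏ`. This is an Abel mean of the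
sequence `Aᵏ`: a weighted average with weights summing to `1`, each of which tends to `0` as
`α → 1⁻`. Abel means of a convergent sequence converge to its limit, which here is `A_*`.
-/

open Filter Topology Finset

lemma hasSum_one_sub_mul_pow {x : ℝ} (h0 : 0 ≤ x) (h1 : x < 1) :
    HasSum (fun n : ℕ => (1 - x) * x ^ n) 1 := by
  simpa [mul_inv_cancel₀ (sub_ne_zero.2 h1.ne')] using
    (hasSum_geometric_of_lt_one h0 h1).mul_left (1 - x)

section AbelMean

variable {E : Type*} [NormedAddCommGroup E] [NormedSpace ℝ E] [CompleteSpace E]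

lemma norm_tsum_one_sub_mul_pow_smul_le {u : ℕ → E} {N : ℕ} {δ : ℝ}
    (hu : ∀ n ≥ N, ‖u n‖ ≤ δ) {x : ℝ} (h0 : 0 ≤ x) (h1 : x < 1) :
    Summable (fun n => ((1 - x) * x ^ n) • u n) ∧
      ‖∑' n, ((1 - x) * x ^ n) • u n‖ ≤ (1 - x) * ∑ n ∈ range N, ‖u n‖ + δ := by
  have hδ : 0 ≤ δ := (norm_nonneg _).trans (hu N le_rfl)
  let head : ℕ → ℝ := fun n => if n < N then ‖u n‖ else 0
  have hhead : HasSum head (∑ n ∈ range N, ‖u n‖) := by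
    have h : HasSum head (∑ n ∈ range N, head n) :=
      hasSum_sum_of_ne_finset_zero fun n hn => if_neg (by simpa using hn)
    rwa [sum_congr rfl fun n hn => if_pos (mem_range.1 hn)] at h
  have hbound : HasSum (fun n => (1 - x) * head n + (1 - x) * x ^ n * δ)
      ((1 - x) * ∑ n ∈ range N, ‖u n‖ + δ) := by
    simpa using (hhead.mul_left (1 - x)).add ((hasSum_one_sub_mul_pow h0 h1).mul_right δ)
  have hle : ∀ n, ‖((1 - x) * x ^ n) • u n‖ ≤ (1 - x) * head n + (1 - x) * x ^ n * δ := by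
    intro n
    have hw : 0 ≤ (1 - x) * x ^ n := mul_nonneg (sub_nonneg.2 h1.le) (pow_nonneg h0 n)
    rw [norm_smul, Real.norm_of_nonneg hw]
    by_cases hn : n < N
    · have hpow : (1 - x) * x ^ n ≤ 1 - x :=
        mul_le_of_le_one_right (sub_nonneg.2 h1.le) (pow_le_one₀ h0 h1.le)
      simp only [head, if_pos hn]
      exact le_add_of_le_of_nonneg (mul_le_mul_of_nonneg_right hpow (norm_nonneg _))
        (mul_nonneg hw hδ)
    · simp only [head, if_neg hn, mul_zero, zero_add]
      exact mul_le_mul_of_nonneg_left (hu n (not_lt.1 hn)) hw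
  exact ⟨.of_norm_bounded hbound.summable hle, tsum_of_norm_bounded hbound hle⟩

theorem tendsto_tsum_one_sub_mul_pow_smul {a : ℕ → E} {L : E} (ha : Tendsto a atTop (𝓝 L)) :
    Tendsto (fun x : ℝ => ∑' n, ((1 - x) * x ^ n) • a n) (𝓝[<] 1) (𝓝 L) := by
  rw [Metric.tendsto_nhds]
  intro ε hε
  obtain ⟨N, hN⟩ := Metric.tendsto_atTop.1 ha (ε / 2) (half_pos hε)
  have hhead : ∀ᶠ x in 𝓝[<] (1 : ℝ), (1 - x) * ∑ n ∈ range N, ‖a n - L‖ < ε / 2 := by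
    have : Tendsto (fun x : ℝ => (1 - x) * ∑ n ∈ range N, ‖a n - L‖) (𝓝 1) (𝓝 0) :=
      Continuous.tendsto' (by fun_prop) 1 0 (by simp)
    exact (this.eventually (gt_mem_nhds (half_pos hε))).filter_mono nhdsWithin_le_nhds
  filter_upwards [hhead, Ioo_mem_nhdsLT zero_lt_one] with x hx ⟨h0, h1⟩
  obtain ⟨hsum, hle⟩ := norm_tsum_one_sub_mul_pow_smul_le (u := fun n => a n - L)
    (fun n hn => (dist_eq_norm (a n) L ▸ hN n hn).le) h0.le h1
  have hconst : HasSum (fun n => ((1 - x) * x ^ n) • L) L := by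
    simpa using (hasSum_one_sub_mul_pow h0.le h1).smul_const L
  have hsplit : ∑' n, ((1 - x) * x ^ n) • a n = ∑' n, ((1 - x) * x ^ n) • (a n - L) + L := by
    simpa [smul_sub] using (hsum.hasSum.add hconst).tsum_eq
  rw [dist_eq_norm, hsplit, add_sub_cancel_right]
  linarith

end AbelMean

lemma norm_smul_lt_one {𝕜 F : Type*} [NormedField 𝕜] [SeminormedAddCommGroup F]
    [NormedSpace 𝕜 F] {c : 𝕜} {v : F} (hc : ‖c‖ < 1) (hv : ‖v‖ ≤ 1) : ‖c • v‖ < 1 := by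
  rw [norm_smul]
  exact (mul_le_of_le_one_right (norm_nonneg c) hv).trans_lt hc

lemma tsum_one_sub_mul_pow_smul_pow {R : Type*} [NormedRing R] [NormedAlgebra ℝ R]
    [CompleteSpace R] {a : R} (ha : ‖a‖ ≤ 1) {x : ℝ} (hx : ‖x‖ < 1) :
    ∑' k : ℕ, ((1 - x) * x ^ k) • a ^ k = (1 - x) • Ring.inverse (1 - x • a) := by
  have hxa : ‖x • a‖ < 1 := norm_smul_lt_one hx ha
  rw [← geom_series_eq_inverse _ hxa,
    ← (summable_geometric_of_norm_lt_one hxa).tsum_const_smul (1 - x)]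
  simp only [smul_pow, smul_smul]

namespace Matrix

variable {n : Type*} [Fintype n] [DecidableEq n] {A : Matrix n n ℝ}

attribute [local instance] Matrix.linftyOpNormedRing Matrix.linftyOpNormedAlgebra

lemma linfty_opNorm_le_one_of_mem_rowStochastic (hA : A ∈ rowStochastic ℝ n) : ‖A‖ ≤ 1 := by
  rw [← NNReal.coe_one, ← coe_nnnorm, NNReal.coe_le_coe, linfty_opNNNorm_def]
  refine Finset.sup_le fun i _ => le_of_eq ?_
  rw [← NNReal.coe_inj, NNReal.coe_sum, NNReal.coe_one, ← sum_row_of_mem_rowStochastic hA i]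
  exact sum_congr rfl fun j _ => Real.norm_of_nonneg (nonneg_of_mem_rowStochastic hA)

lemma isUnit_one_sub_smul_of_mem_rowStochastic (hA : A ∈ rowStochastic ℝ n) {x : ℝ}
    (hx : |x| < 1) : IsUnit (1 - x • A) :=
  isUnit_one_sub_of_norm_lt_one <|
    norm_smul_lt_one hx (linfty_opNorm_le_one_of_mem_rowStochastic hA)

theorem tendsto_one_sub_smul_inv_one_sub_smul_of_tendsto_pow (hA : A ∈ rowStochastic ℝ n)
    {L : Matrix n n ℝ} (hL : Tendsto (A ^ ·) atTop (𝓝 L)) :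
    Tendsto (fun x : ℝ => (1 - x) • (1 - x • A)⁻¹) (𝓝[<] 1) (𝓝 L) := by
  refine (tendsto_tsum_one_sub_mul_pow_smul hL).congr' ?_
  filter_upwards [Ioo_mem_nhdsLT zero_lt_one] with x ⟨h0, h1⟩
  rw [nonsing_inv_eq_ringInverse]
  exact tsum_one_sub_mul_pow_smul_pow (linfty_opNorm_le_one_of_mem_rowStochastic hA)
    (abs_lt.2 ⟨by linarith, h1⟩)

end Matrix

/-- if A is a regular row-stochastic matrix with A_* = lim A^k, then for
every α ∈ (0,1) the matrix I - αA is invertible, and (1-α)(I-αA)⁻¹ → A_* as α → 1⁻. -/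
theorem regular_stochastic_resolvent_limit {d : ℕ}
    (A : Matrix (Fin d) (Fin d) ℝ)
    (hA0 : ∀ i j, 0 ≤ A i j) (hA1 : ∀ i, ∑ j, A i j = 1)
    (Astar : Matrix (Fin d) (Fin d) ℝ)
    (hreg : Tendsto (fun k => A ^ k) atTop (nhds Astar)) :
    (∀ α : ℝ, α ∈ Set.Ioo (0 : ℝ) 1 → IsUnit (1 - α • A)) ∧
    Tendsto (fun α : ℝ => (1 - α) • (1 - α • A)⁻¹)
      (nhdsWithin 1 (Set.Ioo (0 : ℝ) 1)) (nhds Astar) := by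
  have hA : A ∈ Matrix.rowStochastic ℝ (Fin d) := Matrix.mem_rowStochastic_iff_sum.2 ⟨hA0, hA1⟩
  refine ⟨fun α hα => Matrix.isUnit_one_sub_smul_of_mem_rowStochastic hA
    (abs_lt.2 ⟨by linarith [hα.1], hα.2⟩), ?_⟩
  exact (Matrix.tendsto_one_sub_smul_inv_one_sub_smul_of_tendsto_pow hA hreg).mono_left
    (nhdsWithin_mono _ Set.Ioo_subset_Iio_self)
end

section
/- Suppose the FJ model x(k+1) = ΛW x(k) + (I_n − Λ)u is convergent, with limit x'(u) = lim_{k→∞} x(k) for each u ∈ ℝ^n. For α ∈ (0,1), the 'stubborn approximation' x_α(k+1) = αΛW x_α(k) + (I_n − αΛ)u, x_α(0) = u, is stable and converges to x'_α(u) = (I − αΛW)^{-1}(I − αΛ)u. Then, for every u ∈ ℝ^n, x'_α(u) → x'(u) as α → 1⁻. -/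
/-!
`A := ΛW` has nonnegative entries and row sums at most one, so it does not increase the sup norm;
hence `αA` is a strict contraction for `α < 1`, which makes `I - αA` invertible and the stubborn
iteration converge. The FJ limit `x'` is a fixed point of `x ↦ Ax + (I - Λ)u`, so
`A^k (u - x') → 0`, and `x'_α - x' = (1 - α)(I - αA)⁻¹(u - x')`. Writing
`(I - αA)⁻¹ = ∑_{j<N} (αA)^j + (I - αA)⁻¹(αA)^N` and using `‖(1 - α)(I - αA)⁻¹‖ ≤ 1` bounds this
by `(1 - α) N ‖u - x'‖ + ‖A^N (u - x')‖`, which is small for `N` large and then `α` close to `1`.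
-/

open Filter Topology Matrix

namespace Matrix

variable {ι : Type*} [Fintype ι]

theorem norm_mulVec_le_of_nonneg_of_sum_le_one {B : Matrix ι ι ℝ} (hB0 : ∀ i j, 0 ≤ B i j)
    (hB1 : ∀ i, ∑ j, B i j ≤ 1) (x : ι → ℝ) : ‖B *ᵥ x‖ ≤ ‖x‖ := by
  refine (pi_norm_le_iff_of_nonneg (norm_nonneg x)).2 fun i => ?_
  calc ‖(B *ᵥ x) i‖ = |∑ j, B i j * x j| := rfl
    _ ≤ ∑ j, |B i j * x j| := Finset.abs_sum_le_sum_abs _ _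
    _ ≤ ∑ j, B i j * ‖x‖ := Finset.sum_le_sum fun j _ => by
        rw [abs_mul, abs_of_nonneg (hB0 i j)]
        exact mul_le_mul_of_nonneg_left (norm_le_pi_norm x j) (hB0 i j)
    _ = (∑ j, B i j) * ‖x‖ := (Finset.sum_mul ..).symm
    _ ≤ ‖x‖ := mul_le_of_le_one_left (norm_nonneg x) (hB1 i)

theorem norm_smul_mulVec_le {A : Matrix ι ι ℝ} (hA : ∀ x, ‖A *ᵥ x‖ ≤ ‖x‖) {α : ℝ} (hα : 0 ≤ α)
    (x : ι → ℝ) : ‖(α • A) *ᵥ x‖ ≤ α * ‖x‖ := by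
  rw [smul_mulVec, norm_smul, Real.norm_of_nonneg hα]
  exact mul_le_mul_of_nonneg_left (hA x) hα

variable [DecidableEq ι]

theorem norm_pow_mulVec_le {B : Matrix ι ι ℝ} {c : ℝ} (hc : 0 ≤ c)
    (hB : ∀ x, ‖B *ᵥ x‖ ≤ c * ‖x‖) (k : ℕ) (x : ι → ℝ) : ‖(B ^ k) *ᵥ x‖ ≤ c ^ k * ‖x‖ := by
  induction k with
  | zero => simp
  | succ k ih =>
    calc ‖(B ^ (k + 1)) *ᵥ x‖ = ‖B *ᵥ ((B ^ k) *ᵥ x)‖ := by rw [mulVec_mulVec, ← pow_succ']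
      _ ≤ c * (c ^ k * ‖x‖) := (hB _).trans (mul_le_mul_of_nonneg_left ih hc)
      _ = c ^ (k + 1) * ‖x‖ := by ring

theorem iterate_affine_sub_eq_pow_mulVec {R : Type*} [Ring R] (B : Matrix ι ι R) {b p : ι → R}
    (hp : B *ᵥ p + b = p) (k : ℕ) (x : ι → R) :
    (fun y => B *ᵥ y + b)^[k] x - p = (B ^ k) *ᵥ (x - p) := by
  induction k with
  | zero => simp
  | succ k ih =>
    rw [Function.iterate_succ_apply', pow_succ', ← mulVec_mulVec, ← ih, mulVec_sub]
    nth_rewrite 1 [← hp]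
    abel

theorem tendsto_iterate_affine_of_norm_le {B : Matrix ι ι ℝ} {c : ℝ} (hc0 : 0 ≤ c) (hc1 : c < 1)
    (hB : ∀ x, ‖B *ᵥ x‖ ≤ c * ‖x‖) {b p : ι → ℝ} (hp : B *ᵥ p + b = p) (x : ι → ℝ) :
    Tendsto (fun k => (fun y => B *ᵥ y + b)^[k] x) atTop (𝓝 p) := by
  rw [← tendsto_sub_nhds_zero_iff]
  refine squeeze_zero_norm (fun k => ?_)
    (by simpa using (tendsto_pow_atTop_nhds_zero_of_lt_one hc0 hc1).mul_const ‖x - p‖)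
  rw [iterate_affine_sub_eq_pow_mulVec B hp]
  exact norm_pow_mulVec_le hc0 hB k _

theorem mulVec_inv_one_sub_mulVec_add {R : Type*} [CommRing R] {B : Matrix ι ι R}
    (h : IsUnit (1 - B)) (b : ι → R) :
    B *ᵥ ((1 - B)⁻¹ *ᵥ b) + b = (1 - B)⁻¹ *ᵥ b := by
  set p := (1 - B)⁻¹ *ᵥ b
  have hp : (1 - B) *ᵥ p = b := by
    rw [mulVec_mulVec, mul_nonsing_inv _ ((isUnit_iff_isUnit_det _).1 h), one_mulVec]
  rw [← hp, sub_mulVec, one_mulVec, add_sub_cancel]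

theorem inv_one_sub_smul_mulVec_sub {R : Type*} [CommRing R] {A D : Matrix ι ι R} {α : R}
    (h : IsUnit (1 - α • A)) {u p : ι → R} (hp : A *ᵥ p + (1 - D) *ᵥ u = p) :
    (1 - α • A)⁻¹ *ᵥ ((1 - α • D) *ᵥ u) - p = (1 - α) • (1 - α • A)⁻¹ *ᵥ (u - p) := by
  have hsplit : (1 - α • D) *ᵥ u = (1 - α • A) *ᵥ p + (1 - α) • (u - p) := by
    simp only [sub_mulVec, one_mulVec, smul_mulVec] at hp ⊢
    linear_combination (norm := module) α • hp
  rw [hsplit, mulVec_add, mulVec_mulVec, nonsing_inv_mul _ ((isUnit_iff_isUnit_det _).1 h),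
    one_mulVec, mulVec_smul, add_sub_cancel_left]

section Contraction

variable {A : Matrix ι ι ℝ} {α : ℝ}

theorem one_sub_mul_norm_le_norm_one_sub_smul_mulVec (hA : ∀ x, ‖A *ᵥ x‖ ≤ ‖x‖) (hα : 0 ≤ α)
    (x : ι → ℝ) :
    (1 - α) * ‖x‖ ≤ ‖(1 - α • A) *ᵥ x‖ := by
  have := norm_sub_norm_le x ((α • A) *ᵥ x)
  rw [sub_mulVec, one_mulVec]
  linarith [norm_smul_mulVec_le hA hα x]

theorem isUnit_one_sub_smul (hA : ∀ x, ‖A *ᵥ x‖ ≤ ‖x‖) (hα0 : 0 ≤ α) (hα1 : α < 1) :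
    IsUnit (1 - α • A) := by
  refine mulVec_injective_iff_isUnit.1 fun x y hxy => ?_
  have h := one_sub_mul_norm_le_norm_one_sub_smul_mulVec hA hα0 (x - y)
  rw [mulVec_sub, hxy, sub_self, norm_zero] at h
  exact sub_eq_zero.1 (norm_le_zero_iff.1 (nonpos_of_mul_nonpos_right h (sub_pos.2 hα1)))

theorem one_sub_mul_norm_inv_mulVec_le (hA : ∀ x, ‖A *ᵥ x‖ ≤ ‖x‖) (hα0 : 0 ≤ α) (hα1 : α < 1)
    (w : ι → ℝ) :
    (1 - α) * ‖(1 - α • A)⁻¹ *ᵥ w‖ ≤ ‖w‖ := by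
  have hdet := (isUnit_iff_isUnit_det _).1 (isUnit_one_sub_smul hA hα0 hα1)
  have h := one_sub_mul_norm_le_norm_one_sub_smul_mulVec hA hα0 ((1 - α • A)⁻¹ *ᵥ w)
  rwa [mulVec_mulVec, mul_nonsing_inv _ hdet, one_mulVec] at h

theorem norm_one_sub_smul_inv_mulVec_le (hA : ∀ x, ‖A *ᵥ x‖ ≤ ‖x‖) (hα0 : 0 ≤ α) (hα1 : α < 1)
    (v : ι → ℝ) (N : ℕ) :
    ‖(1 - α) • (1 - α • A)⁻¹ *ᵥ v‖ ≤ (1 - α) * N * ‖v‖ + ‖(A ^ N) *ᵥ v‖ := by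
  have hdet := (isUnit_iff_isUnit_det _).1 (isUnit_one_sub_smul hA hα0 hα1)
  have hsplit : (1 - α • A)⁻¹ =
      ∑ j ∈ Finset.range N, (α • A) ^ j + (1 - α • A)⁻¹ * (α • A) ^ N := by
    rw [← nonsing_inv_mul_cancel_left _ (∑ j ∈ Finset.range N, (α • A) ^ j) hdet,
      mul_neg_geom_sum, mul_sub, mul_one, sub_add_cancel]
  have hαA : ∀ x, ‖(α • A) *ᵥ x‖ ≤ 1 * ‖x‖ := fun x =>
    (norm_smul_mulVec_le hA hα0 x).trans (mul_le_mul_of_nonneg_right hα1.le (norm_nonneg x))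
  rw [hsplit, add_mulVec, smul_add, ← mulVec_mulVec]
  refine (norm_add_le _ _).trans (add_le_add ?_ ?_)
  · rw [norm_smul, Real.norm_of_nonneg (sub_nonneg.2 hα1.le), mul_assoc]
    refine mul_le_mul_of_nonneg_left ?_ (sub_nonneg.2 hα1.le)
    rw [sum_mulVec]
    refine (norm_sum_le _ _).trans ?_
    simpa using Finset.sum_le_sum fun j (_ : j ∈ Finset.range N) =>
      norm_pow_mulVec_le zero_le_one hαA j v
  · rw [norm_smul, Real.norm_of_nonneg (sub_nonneg.2 hα1.le)]
    calc (1 - α) * ‖(1 - α • A)⁻¹ *ᵥ ((α • A) ^ N *ᵥ v)‖ ≤ ‖(α • A) ^ N *ᵥ v‖ :=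
          one_sub_mul_norm_inv_mulVec_le hA hα0 hα1 _
      _ ≤ ‖(A ^ N) *ᵥ v‖ := by
          rw [smul_pow, smul_mulVec, norm_smul, Real.norm_of_nonneg (pow_nonneg hα0 N)]
          exact mul_le_of_le_one_left (norm_nonneg _) (pow_le_one₀ hα0 hα1.le)

theorem tendsto_one_sub_smul_inv_mulVec (hA : ∀ x, ‖A *ᵥ x‖ ≤ ‖x‖) {v : ι → ℝ}
    (hv : Tendsto (fun k => (A ^ k) *ᵥ v) atTop (𝓝 0)) :
    Tendsto (fun α : ℝ => (1 - α) • (1 - α • A)⁻¹ *ᵥ v) (𝓝[Set.Ioo 0 1] 1) (𝓝 0) := by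
  refine Metric.tendsto_nhds.2 fun ε hε => ?_
  have hv' : Tendsto (fun k => ‖(A ^ k) *ᵥ v‖) atTop (𝓝 0) := by simpa using hv.norm
  obtain ⟨N, hN⟩ := (hv'.eventually (gt_mem_nhds (half_pos hε))).exists
  have hlin : Tendsto (fun α : ℝ => (1 - α) * N * ‖v‖) (𝓝[Set.Ioo 0 1] 1) (𝓝 0) := by
    refine tendsto_nhdsWithin_of_tendsto_nhds ?_
    have hc : Continuous fun α : ℝ => (1 - α) * N * ‖v‖ := by fun_prop
    simpa using hc.tendsto 1
  filter_upwards [hlin.eventually (gt_mem_nhds (half_pos hε)), self_mem_nhdsWithin]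
    with α hα ⟨hα0, hα1⟩
  rw [dist_zero_right]
  linarith [norm_one_sub_smul_inv_mulVec_le hA hα0.le hα1 v N]

end Contraction

end Matrix

/-- suppose the FJ model x(k+1) = ΛW x(k) + (I-Λ)u is convergent with limit
x'(u) for each u. For α ∈ (0,1) the stubborn approximation
x_α(k+1) = αΛW x_α(k) + (I-αΛ)u is stable and converges to
x'_α(u) = (I - αΛW)⁻¹(I - αΛ)u; moreover x'_α(u) → x'(u) as α → 1⁻, for every u. -/
theorem fj_stubborn_approximation {n : ℕ}
    (W : Matrix (Fin n) (Fin n) ℝ) (lam : Fin n → ℝ)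
    (hW0 : ∀ i j, 0 ≤ W i j) (hW1 : ∀ i, ∑ j, W i j = 1)
    (hlam : ∀ i, 0 ≤ lam i ∧ lam i ≤ 1)
    (xlim : (Fin n → ℝ) → (Fin n → ℝ))
    (hconv : ∀ u : Fin n → ℝ,
      Tendsto (fun k => (fun x => (Matrix.diagonal lam * W).mulVec x
          + (1 - Matrix.diagonal lam).mulVec u)^[k] u) atTop (nhds (xlim u))) :
    (∀ α : ℝ, α ∈ Set.Ioo (0 : ℝ) 1 →
      IsUnit (1 - α • (Matrix.diagonal lam * W)) ∧
      ∀ u : Fin n → ℝ,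
        Tendsto (fun k => (fun x => (α • (Matrix.diagonal lam * W)).mulVec x
            + (1 - α • Matrix.diagonal lam).mulVec u)^[k] u) atTop
          (nhds ((1 - α • (Matrix.diagonal lam * W))⁻¹.mulVec
            ((1 - α • Matrix.diagonal lam).mulVec u)))) ∧
    (∀ u : Fin n → ℝ,
      Tendsto (fun α : ℝ => (1 - α • (Matrix.diagonal lam * W))⁻¹.mulVec
          ((1 - α • Matrix.diagonal lam).mulVec u))
        (nhdsWithin 1 (Set.Ioo (0 : ℝ) 1)) (nhds (xlim u))) := by
  set A := diagonal lam * W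
  have hA : ∀ x, ‖A *ᵥ x‖ ≤ ‖x‖ := norm_mulVec_le_of_nonneg_of_sum_le_one
    (fun i j => by simpa [A] using mul_nonneg (hlam i).1 (hW0 i j))
    (fun i => by simpa [A, ← Finset.mul_sum, hW1] using (hlam i).2)
  have hunit : ∀ α ∈ Set.Ioo (0 : ℝ) 1, IsUnit (1 - α • A) := fun α hα =>
    isUnit_one_sub_smul hA hα.1.le hα.2
  refine ⟨fun α hα => ⟨hunit α hα, fun u => ?_⟩, fun u => ?_⟩
  · exact tendsto_iterate_affine_of_norm_le hα.1.le hα.2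
      (norm_smul_mulVec_le hA hα.1.le) (mulVec_inv_one_sub_mulVec_add (hunit α hα) _) u
  · have hfix : A *ᵥ xlim u + (1 - diagonal lam) *ᵥ u = xlim u :=
      isFixedPt_of_tendsto_iterate (hconv u) (by fun_prop : Continuous _).continuousAt
    have hpow : Tendsto (fun k => (A ^ k) *ᵥ (u - xlim u)) atTop (𝓝 0) := by
      simpa only [← iterate_affine_sub_eq_pow_mulVec A hfix, sub_self] using
        (hconv u).sub_const (xlim u)
    refine tendsto_sub_nhds_zero_iff.1 ((tendsto_one_sub_smul_inv_mulVec hA hpow).congr' ?_)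
    filter_upwards [self_mem_nhdsWithin] with α hα
    exact (inv_one_sub_smul_mulVec_sub (hunit α hα) hfix).symm
end
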